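/- Let φ ∈ L^∞([0,1]), α ∈ [0,1] and 1 < p < ∞. The weighted translation operator T = T_{φ,α} on X = L^p([0,1]) does not satisfy the Hypercyclicity Criterion: there do not exist dense subsets X₀ and Y₀ of X, a strictly increasing sequence (n_k) of positive integers, and maps S_{n_k} : Y₀ → X such that (i) T^{n_k} x → 0 as k → ∞ for every x ∈ X₀, (ii) S_{n_k} y → 0 as k → ∞ for every y ∈ Y₀, and (iii) T^{n_k} S_{n_k} y → y as k → ∞ for every y ∈ Y₀. -/

import Mathlib

/-!
Fix `N = n k` and let `e = τ^N`, where `τ x = {x + α}` is a rotation of `ℝ ⧸ ℤ` and so preserves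
`μ01`. By Hölder, `(F, G) ↦ F · (G ∘ e)` is bounded from `L^p × L^p` to the quasi-normed
`L^{p/2}`, and `T^N` is symmetric for it: `(T^N f) · (g ∘ e)` and `(T^N g) · (f ∘ e)` both equal
`w_N · (f ∘ e) · (g ∘ e)` with `w_N = ∏_{j<N} φ ∘ τ^j`. Take `x ∈ X₀`, `y ∈ Y₀` close to `1` and
split `1 · (1 ∘ e)` as
`(1 - y)(1 ∘ e) + y ((1 - x) ∘ e) + (y - T^N S y)(x ∘ e) + (T^N x)((S y) ∘ e)`.
For large `k` every term is small in `L^{p/2}`, whereas `1 · (1 ∘ e) = 1` has norm `1`.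
-/

open MeasureTheory Set Filter Topology Polynomial
open scoped ENNReal NNReal

/-- Lebesgue measure restricted to `[0,1]`. -/
noncomputable def μ01 : Measure ℝ := volume.restrict (Set.Icc 0 1)

/-- `T` is the Bishop operator `T_α` on `L^p([0,1])`, i.e.
`(T f)(x) = x · f({x + α})` for a.e. `x ∈ [0,1]`, where `{·}` is the fractional part. -/
def IsBishopOp (p : ℝ≥0∞) [Fact (1 ≤ p)] (α : ℝ)
    (T : Lp ℂ p μ01 →L[ℂ] Lp ℂ p μ01) : Prop :=
  ∀ f : Lp ℂ p μ01, ∀ᵐ x ∂μ01, (T f) x = (x : ℂ) * f (Int.fract (x + α))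

/-- `T` is the weighted translation operator `T_{φ,α}` on `L^p([0,1])`, i.e.
`(T f)(x) = φ(x) · f({x + α})` for a.e. `x ∈ [0,1]`. -/
def IsWTOp (p : ℝ≥0∞) [Fact (1 ≤ p)] (φ : ℝ → ℂ) (α : ℝ)
    (T : Lp ℂ p μ01 →L[ℂ] Lp ℂ p μ01) : Prop :=
  ∀ f : Lp ℂ p μ01, ∀ᵐ x ∂μ01, (T f) x = φ x * f (Int.fract (x + α))

instance : IsProbabilityMeasure μ01 := by
  constructor
  rw [μ01, Measure.restrict_apply_univ, Real.volume_Icc]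
  norm_num

theorem measurePreserving_coe_unitAddCircle :
    MeasurePreserving ((↑) : ℝ → UnitAddCircle) μ01 volume := by
  have h := UnitAddCircle.measurePreserving_mk 0
  rwa [zero_add, Measure.restrict_congr_set Ioc_ae_eq_Icc] at h

theorem measurePreserving_equivIco_unitAddCircle :
    MeasurePreserving (fun z : UnitAddCircle => (AddCircle.equivIco 1 0 z : ℝ)) volume μ01 := by
  have hmeas : Measurable fun z : UnitAddCircle => (AddCircle.equivIco 1 0 z : ℝ) :=
    measurable_subtype_coe.comp (AddCircle.measurableEquivIco 1 0).measurable
  refine ⟨hmeas, ?_⟩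
  have hfract : ∀ᵐ x ∂μ01, Int.fract x = x := by
    rw [μ01, ← Measure.restrict_congr_set Ico_ae_eq_Icc, ae_restrict_iff' measurableSet_Ico]
    exact .of_forall fun x hx => Int.fract_eq_self.mpr hx
  rw [← measurePreserving_coe_unitAddCircle.map_eq,
    Measure.map_map hmeas measurePreserving_coe_unitAddCircle.measurable]
  convert Measure.map_congr hfract using 2
  · ext x; exact toIcoMod_zero_one x
  · simp

theorem measurePreserving_fract_add (α : ℝ) :
    MeasurePreserving (fun x => Int.fract (x + α)) μ01 μ01 := by
  have h := measurePreserving_equivIco_unitAddCircle.comp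
    ((measurePreserving_add_right volume (α : UnitAddCircle)).comp
      measurePreserving_coe_unitAddCircle)
  convert h using 1
  ext x
  rw [Function.comp_apply, Function.comp_apply, ← AddCircle.coe_add]
  exact (toIcoMod_zero_one (x + α)).symm

instance ENNReal.holderTriple_div_two (p : ℝ≥0∞) : ENNReal.HolderTriple p p (p / 2) where
  inv_add_inv_eq_inv := by
    rw [ENNReal.inv_div (by simp) (by simp), ENNReal.div_eq_inv_mul, ← two_mul, mul_comm]

section
variable {X : Type*} [MeasurableSpace X] {μ : Measure X} {e : X → X} {p : ℝ≥0∞}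

theorem eLpNorm_mul_comp_le (he : MeasurePreserving e μ μ) {F G : X → ℂ}
    (hF : AEStronglyMeasurable F μ) (hG : AEStronglyMeasurable G μ) :
    eLpNorm (fun t => F t * G (e t)) (p / 2) μ ≤ eLpNorm F p μ * eLpNorm G p μ := by
  have h := eLpNorm_le_eLpNorm_mul_eLpNorm_of_nnnorm (p := p) (q := p) (r := p / 2) hF
    (hG.comp_measurePreserving he) (· * ·) 1 (.of_forall fun t => by simp)
  rwa [ENNReal.coe_one, one_mul, eLpNorm_comp_measurePreserving hG he] at h

theorem eLpNorm_add_add_le {f g h k : X → ℂ} (hf : AEStronglyMeasurable f μ)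
    (hg : AEStronglyMeasurable g μ) (hh : AEStronglyMeasurable h μ)
    (hk : AEStronglyMeasurable k μ) (p : ℝ≥0∞) :
    eLpNorm (f + g + (h + k)) p μ ≤ ENNReal.LpAddConst p ^ 2 *
      (eLpNorm f p μ + eLpNorm g p μ + (eLpNorm h p μ + eLpNorm k p μ)) :=
  calc eLpNorm (f + g + (h + k)) p μ
      ≤ ENNReal.LpAddConst p * (eLpNorm (f + g) p μ + eLpNorm (h + k) p μ) :=
        eLpNorm_add_le' (hf.add hg) (hh.add hk) p
    _ ≤ ENNReal.LpAddConst p * (ENNReal.LpAddConst p * (eLpNorm f p μ + eLpNorm g p μ) +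
          ENNReal.LpAddConst p * (eLpNorm h p μ + eLpNorm k p μ)) := by
        gcongr <;> exact eLpNorm_add_le' ‹_› ‹_› p
    _ = _ := by ring

variable [Fact (1 ≤ p)]

theorem toReal_eLpNorm_mul_comp_self_le (he : MeasurePreserving e μ μ) (c x y u v w : Lp ℂ p μ)
    (hvw : (fun t => v t * x (e t)) =ᵐ[μ] fun t => w t * u (e t)) :
    (eLpNorm (fun t => c t * c (e t)) (p / 2) μ).toReal ≤
      (ENNReal.LpAddConst (p / 2) ^ 2).toReal *
        (‖c - y‖ * ‖c‖ + ‖y‖ * ‖c - x‖ + (‖y - v‖ * ‖x‖ + ‖w‖ * ‖u‖)) := by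
  let Q (F G : Lp ℂ p μ) : X → ℂ := fun t => F t * G (e t)
  have hQ (F G : Lp ℂ p μ) : AEStronglyMeasurable (Q F G) μ :=
    (Lp.aestronglyMeasurable F).mul ((Lp.aestronglyMeasurable G).comp_measurePreserving he)
  have hQ_le (F G : Lp ℂ p μ) : eLpNorm (Q F G) (p / 2) μ ≤ ‖F‖ₑ * ‖G‖ₑ := by
    rw [Lp.enorm_def, Lp.enorm_def]
    exact eLpNorm_mul_comp_le he (Lp.aestronglyMeasurable F) (Lp.aestronglyMeasurable G)
  have hdecomp : Q c c =ᵐ[μ] Q (c - y) c + Q y (c - x) + (Q (y - v) x + Q w u) := by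
    filter_upwards [Lp.coeFn_sub c y, he.quasiMeasurePreserving.ae_eq_comp (Lp.coeFn_sub c x),
      Lp.coeFn_sub y v, hvw] with t hcy hcx hyv ht
    simp only [Q, Pi.add_apply, Function.comp_apply] at hcx ⊢
    rw [hcy, hcx, hyv, Pi.sub_apply, Pi.sub_apply, Pi.sub_apply]
    linear_combination ht
  have hle : eLpNorm (Q c c) (p / 2) μ ≤ ENNReal.LpAddConst (p / 2) ^ 2 *
      (‖c - y‖ₑ * ‖c‖ₑ + ‖y‖ₑ * ‖c - x‖ₑ + (‖y - v‖ₑ * ‖x‖ₑ + ‖w‖ₑ * ‖u‖ₑ)) := by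
    rw [eLpNorm_congr_ae hdecomp]
    refine (eLpNorm_add_add_le (hQ _ _) (hQ _ _) (hQ _ _) (hQ _ _) _).trans ?_
    gcongr <;> exact hQ_le _ _
  refine ENNReal.toReal_le_of_le_ofReal (by positivity) (hle.trans_eq ?_)
  have hC : ENNReal.LpAddConst (p / 2) ^ 2 ≠ ∞ := by
    finiteness [ENNReal.LpAddConst_lt_top (p / 2)]
  simp only [← ofReal_norm, ← ENNReal.ofReal_mul (norm_nonneg _)]
  rw [ENNReal.ofReal_mul ENNReal.toReal_nonneg, ENNReal.ofReal_toReal hC, ENNReal.ofReal_add,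
    ENNReal.ofReal_add, ENNReal.ofReal_add] <;> positivity

end

theorem IsWTOp.pow_apply_ae {p : ℝ≥0∞} [Fact (1 ≤ p)] {φ : ℝ → ℂ} {α : ℝ}
    {T : Lp ℂ p μ01 →L[ℂ] Lp ℂ p μ01} (hT : IsWTOp p φ α T) (n : ℕ) (f : Lp ℂ p μ01) :
    ∀ᵐ x ∂μ01, (T ^ n) f x =
      (∏ j ∈ Finset.range n, φ ((fun y => Int.fract (y + α))^[j] x)) *
        f ((fun y => Int.fract (y + α))^[n] x) := by
  induction n generalizing f with
  | zero => simp
  | succ n ih =>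
    have hstep := ((measurePreserving_fract_add α).iterate n).quasiMeasurePreserving.ae_eq_comp
      (hT f)
    filter_upwards [ih (T f), hstep] with x hx hx'
    rw [pow_succ, mul_apply_eq_comp, hx, Function.comp_apply.symm.trans hx',
      Finset.prod_range_succ, Function.iterate_succ_apply']
    simp only [Function.comp_apply]
    ring

theorem IsWTOp.pow_mul_comp_ae_eq {p : ℝ≥0∞} [Fact (1 ≤ p)] {φ : ℝ → ℂ} {α : ℝ}
    {T : Lp ℂ p μ01 →L[ℂ] Lp ℂ p μ01} (hT : IsWTOp p φ α T) (n : ℕ) (f g : Lp ℂ p μ01) :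
    (fun x => (T ^ n) f x * g ((fun y => Int.fract (y + α))^[n] x)) =ᵐ[μ01]
      fun x => (T ^ n) g x * f ((fun y => Int.fract (y + α))^[n] x) := by
  filter_upwards [hT.pow_apply_ae n f, hT.pow_apply_ae n g] with x hf hg
  rw [hf, hg]
  ring

theorem IsWTOp.one_le_norm_bound {p : ℝ≥0∞} [Fact (1 ≤ p)] {φ : ℝ → ℂ} {α : ℝ}
    {T : Lp ℂ p μ01 →L[ℂ] Lp ℂ p μ01} (hT : IsWTOp p φ α T) (N : ℕ) {c : Lp ℂ p μ01}
    (hc : ∀ᵐ t ∂μ01, c t = 1) (x y u : Lp ℂ p μ01) :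
    1 ≤ (ENNReal.LpAddConst (p / 2) ^ 2).toReal * (‖c - y‖ * ‖c‖ + ‖y‖ * ‖c - x‖ +
      (‖y - (T ^ N) u‖ * ‖x‖ + ‖(T ^ N) x‖ * ‖u‖)) := by
  have he := (measurePreserving_fract_add α).iterate N
  have hone : (fun t => c t * c ((fun y => Int.fract (y + α))^[N] t)) =ᵐ[μ01] fun _ => 1 := by
    filter_upwards [hc, he.quasiMeasurePreserving.ae hc] with t h h'
    rw [h, h', one_mul]
  have hp2 : p / 2 ≠ 0 :=
    (ENNReal.div_pos (zero_lt_one.trans_le Fact.out).ne' ENNReal.ofNat_ne_top).ne'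
  have h := toReal_eLpNorm_mul_comp_self_le he c x y u _ _ (hT.pow_mul_comp_ae_eq N u x)
  rw [eLpNorm_congr_ae hone, eLpNorm_const _ hp2 (NeZero.ne μ01)] at h
  simpa using h

theorem weighted_translation_not_hypercyclicity_criterion_general (p : ℝ≥0∞) [Fact (1 ≤ p)]
    (φ : ℝ → ℂ)
    (α : ℝ)
    (T : Lp ℂ p μ01 →L[ℂ] Lp ℂ p μ01) (hT : IsWTOp p φ α T) :
    ¬ ∃ (X₀ Y₀ : Set (Lp ℂ p μ01)) (n : ℕ → ℕ)
        (S : ℕ → Lp ℂ p μ01 → Lp ℂ p μ01),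
      Dense X₀ ∧ Dense Y₀ ∧ StrictMono n ∧ (∀ k, 0 < n k) ∧
      (∀ x ∈ X₀, Tendsto (fun k => (T ^ n k) x) atTop (𝓝 0)) ∧
      (∀ y ∈ Y₀, Tendsto (fun k => S k y) atTop (𝓝 0)) ∧
      (∀ y ∈ Y₀, Tendsto (fun k => (T ^ n k) (S k y)) atTop (𝓝 y)) := by
  rintro ⟨X₀, Y₀, n, S, hX₀, hY₀, -, -, hTx, hS, hTS⟩
  set c := Lp.const p μ01 (1 : ℂ)
  have hc : ∀ᵐ t ∂μ01, c t = 1 := Lp.coeFn_const p μ01 1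
  set K := (ENNReal.LpAddConst (p / 2) ^ 2).toReal
  have hbound : ∀ q ∈ X₀ ×ˢ Y₀, 1 ≤ K * (‖c - q.2‖ * ‖c‖ + ‖q.2‖ * ‖c - q.1‖) := by
    rintro ⟨x, y⟩ ⟨hx, hy⟩
    have hsmall : Tendsto (fun k => ‖y - (T ^ n k) (S k y)‖ * ‖x‖ + ‖(T ^ n k) x‖ * ‖S k y‖)
        atTop (𝓝 0) := by
      have hTS' : Tendsto (fun k => ‖y - (T ^ n k) (S k y)‖) atTop (𝓝 0) := by
        simpa using ((hTS y hy).const_sub y).norm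
      simpa using (hTS'.mul_const ‖x‖).add ((hTx x hx).norm.mul (hS y hy).norm)
    refine ge_of_tendsto (by simpa only [add_zero] using (hsmall.const_add _).const_mul K)
      (.of_forall fun k => hT.one_le_norm_bound (n k) hc x y (S k y))
  have hcc := le_on_closure (f := fun _ => (1 : ℝ))
    (g := fun q : Lp ℂ p μ01 × Lp ℂ p μ01 => K * (‖c - q.2‖ * ‖c‖ + ‖q.2‖ * ‖c - q.1‖))
    hbound continuousOn_const (by fun_prop) ((hX₀.prod hY₀) (c, c))
  norm_num at hcc

/-- The weighted translation operator `T = T_{φ,α}` on `L^p([0,1])` does not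
satisfy the Hypercyclicity Criterion: there do not exist dense subsets `X₀, Y₀`, a strictly
increasing sequence `(n_k)` of positive integers, and maps `S_{n_k} : Y₀ → X` such that
`T^{n_k} x → 0` on `X₀`, `S_{n_k} y → 0` on `Y₀` and `T^{n_k} S_{n_k} y → y` on `Y₀`. -/
theorem weighted_translation_not_hypercyclicity_criterion (p : ℝ≥0∞) [Fact (1 ≤ p)]
    (hp : 1 < p) (hp' : p ≠ ∞)
    (φ : ℝ → ℂ) (hφ : MemLp φ ⊤ μ01)
    (α : ℝ) (hα : α ∈ Set.Icc (0 : ℝ) 1)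
    (T : Lp ℂ p μ01 →L[ℂ] Lp ℂ p μ01) (hT : IsWTOp p φ α T) :
    ¬ ∃ (X₀ Y₀ : Set (Lp ℂ p μ01)) (n : ℕ → ℕ)
        (S : ℕ → Lp ℂ p μ01 → Lp ℂ p μ01),
      Dense X₀ ∧ Dense Y₀ ∧ StrictMono n ∧ (∀ k, 0 < n k) ∧
      (∀ x ∈ X₀, Tendsto (fun k => (T ^ n k) x) atTop (𝓝 0)) ∧
      (∀ y ∈ Y₀, Tendsto (fun k => S k y) atTop (𝓝 0)) ∧
      (∀ y ∈ Y₀, Tendsto (fun k => (T ^ n k) (S k y)) atTop (𝓝 y)) :=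
  weighted_translation_not_hypercyclicity_criterion_general p φ α T hT
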